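/- For every integer k and every integer n ≥ 1, the poly-Cauchy polynomials of the first kind satisfy C_n^(k)(x) = −x·C_{n-1}^(k)(x+1) + (1/n) Σ_{l=0}^{n} C(n,l) B_l^{(l)}(1) { C_{n-l}^{(k-1)}(x+1) − C_{n-l}^{(k)}(x+1) }, where B_l^{(l)}(1) is the value at 1 of the l-th Bernoulli polynomial of order l. -/

import Mathlib

open PowerSeries Finset

/-- Composition `F(G(t))` of formal power series (intended for `G` with zero
constant term, in which case `coeff n (G ^ m) = 0` for `m > n` and the finite
sum below computes the usual composition). -/
noncomputable def psComp (F G : PowerSeries ℝ) : PowerSeries ℝ :=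
  PowerSeries.mk fun n => ∑ m ∈ Finset.range (n + 1),
    (PowerSeries.coeff m F) * (PowerSeries.coeff n (G ^ m))

/-- The formal power series of `log (1 + t)`. -/
noncomputable def logSeries : PowerSeries ℝ :=
  PowerSeries.mk fun n => if n = 0 then 0 else (-1) ^ (n + 1) / n

/-- The polylogarithm factorial function `Lif_k(t) = ∑_{m ≥ 0} t^m / (m! (m+1)^k)`. -/
noncomputable def Lif (k : ℤ) : PowerSeries ℝ :=
  PowerSeries.mk fun m => 1 / ((m.factorial : ℝ) * ((m : ℝ) + 1) ^ k)

/-- The poly-Cauchy polynomial of the first kind `C_n^{(k)}(x)`, defined by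
`Lif_k(log(1+t)) / (1+t)^x = ∑_{n ≥ 0} C_n^{(k)}(x) t^n / n!`, where
`(1+t)^{-x} = exp (-x · log (1+t))`. -/
noncomputable def polyCauchy (k : ℤ) (n : ℕ) (x : ℝ) : ℝ :=
  (n.factorial : ℝ) * PowerSeries.coeff n
    (psComp (Lif k) logSeries *
      psComp (PowerSeries.rescale (-x) (PowerSeries.exp ℝ)) logSeries)

/-- The (signed) Stirling numbers of the first kind `S₁(l, m)`, defined by
`(log (1+t))^m = m! ∑_{l ≥ m} S₁(l,m) t^l / l!`. -/
noncomputable def S1 (l m : ℕ) : ℝ :=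
  (l.factorial : ℝ) / (m.factorial : ℝ) * PowerSeries.coeff l (logSeries ^ m)

/-- The ordinary Bernoulli numbers, via `t/(e^t - 1) = ∑ B_n t^n/n!`;
here `(mk fun m => 1/(m+1)!)` is the series `(e^t - 1)/t`. -/
noncomputable def Bern (n : ℕ) : ℝ :=
  (n.factorial : ℝ) * PowerSeries.coeff n
    (PowerSeries.mk fun m => (1 : ℝ) / (m + 1).factorial)⁻¹

/-- The Bernoulli polynomial of order `r`, via `(t/(e^t-1))^r e^{xt} = ∑ B_n^{(r)}(x) t^n/n!`. -/
noncomputable def bernPoly (r : ℕ) (n : ℕ) (x : ℝ) : ℝ :=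
  (n.factorial : ℝ) * PowerSeries.coeff n
    (((PowerSeries.mk fun m => (1 : ℝ) / (m + 1).factorial)⁻¹) ^ r *
      PowerSeries.rescale x (PowerSeries.exp ℝ))

/-- The series `log(1+t)/t`, so that `t / log(1+t) = Dlog⁻¹`. -/
noncomputable def Dlog : PowerSeries ℝ :=
  PowerSeries.mk fun n => (-1) ^ n / ((n : ℝ) + 1)

/-- The Cauchy numbers of the first kind, via `t/log(1+t) = ∑ C_n t^n/n!`. -/
noncomputable def cauchyNum (n : ℕ) : ℝ :=
  (n.factorial : ℝ) * PowerSeries.coeff n Dlog⁻¹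

/-- The numbers `T_n^{(r,k)}`, via
`(t/log(1+t))^r · Lif_k(log(1+t)) = ∑ T_n^{(r,k)} t^n/n!`. -/
noncomputable def T (r : ℕ) (k : ℤ) (n : ℕ) : ℝ :=
  (n.factorial : ℝ) * PowerSeries.coeff n (Dlog⁻¹ ^ r * psComp (Lif k) logSeries)

/-- The rising factorial `x^{(m)} = x (x+1) ⋯ (x+m-1)`. -/
noncomputable def risingFactorial (x : ℝ) (m : ℕ) : ℝ :=
  ∏ i ∈ Finset.range m, (x + i)

/-- Carlitz's polynomials `β_n^{(r)}(x)`, via `(t/log(1+t))^r (1+t)^x = ∑ β_n^{(r)}(x) t^n/n!`,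
where `(1+t)^x = exp (x log (1+t))`. -/
noncomputable def carlitz (r : ℕ) (n : ℕ) (x : ℝ) : ℝ :=
  (n.factorial : ℝ) * PowerSeries.coeff n
    (Dlog⁻¹ ^ r * psComp (PowerSeries.rescale x (PowerSeries.exp ℝ)) logSeries)

/-!
Write `L = log(1+t)`. Differentiating `F(t) = Lif_k(L) (1+t)^(-x)` with
`t Lif_k'(t) = Lif_{k-1}(t) - Lif_k(t)` gives
`t F'(t) = (t/L) (Lif_{k-1}(L) - Lif_k(L)) (1+t)^(-x-1) - x t Lif_k(L) (1+t)^(-x-1)`,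
and comparing coefficients gives the recurrence with the Cauchy numbers `c_l`, the coefficients of
`t/L`, in place of `B_l^{(l)}(1)`.

It remains to see `B_n^{(n)}(1) = c_n`. The differential equation of `(t/(e^t-1))^r e^{xt}` gives a
recurrence in the order `r`, whence `B_n^{(n+1)}(x) = (x-1)(x-2)⋯(x-n)`. As
`B_{n+1}^{(n+1)}(x+1) - B_{n+1}^{(n+1)}(x) = (n+1) B_n^{(n)}(x)` and
`∂ₓ B_{n+1}^{(r)} = (n+1) B_n^{(r)}`, we get
`B_n^{(n)}(1) = ∫_1^2 B_n^{(n+1)}(y) dy = ∫_0^1 y(y-1)⋯(y-n+1) dy = c_n`,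
the last step because `t/L = ∫_0^1 (1+t)^y dy`.
-/

section

open scoped Nat

variable {G : ℝ⟦X⟧}

theorem coeff_pow_eq_zero_of_lt (hG : constantCoeff G = 0) {n m : ℕ} (h : n < m) :
    coeff n (G ^ m) = 0 :=
  X_pow_dvd_iff.mp (pow_dvd_pow_of_dvd (X_dvd_iff.mpr hG) m) n h

theorem psComp_eq_subst (hG : constantCoeff G = 0) (F : ℝ⟦X⟧) : psComp F G = F.subst G := by
  ext n
  rw [psComp, coeff_mk, coeff_subst' (HasSubst.of_constantCoeff_zero' hG)]
  refine (finsum_eq_sum_of_support_subset _ fun m hm => ?_).symm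
  rw [coe_range, Set.mem_Iio]
  by_contra! h
  exact hm (by simp only [coeff_pow_eq_zero_of_lt hG h, mul_zero])

theorem psComp_mul (hG : constantCoeff G = 0) (F H : ℝ⟦X⟧) :
    psComp (F * H) G = psComp F G * psComp H G := by
  simp only [psComp_eq_subst hG, subst_mul (HasSubst.of_constantCoeff_zero' hG)]

theorem psComp_sub (hG : constantCoeff G = 0) (F H : ℝ⟦X⟧) :
    psComp (F - H) G = psComp F G - psComp H G := by
  simp only [psComp_eq_subst hG, subst_sub (HasSubst.of_constantCoeff_zero' hG)]

theorem psComp_one (hG : constantCoeff G = 0) : psComp 1 G = 1 := by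
  rw [psComp_eq_subst hG, ← coe_substAlgHom (HasSubst.of_constantCoeff_zero' hG), map_one]

theorem psComp_smul (hG : constantCoeff G = 0) (a : ℝ) (F : ℝ⟦X⟧) :
    psComp (a • F) G = a • psComp F G := by
  simp only [psComp_eq_subst hG, subst_smul (HasSubst.of_constantCoeff_zero' hG)]

theorem psComp_X (hG : constantCoeff G = 0) : psComp X G = G := by
  rw [psComp_eq_subst hG, subst_X (HasSubst.of_constantCoeff_zero' hG)]

theorem psComp_X_mul (hG : constantCoeff G = 0) (F : ℝ⟦X⟧) :
    psComp (X * F) G = G * psComp F G := by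
  rw [psComp_mul hG, psComp_X hG]

theorem derivative_psComp (hG : constantCoeff G = 0) (F : ℝ⟦X⟧) :
    d⁄dX ℝ (psComp F G) = psComp (d⁄dX ℝ F) G * d⁄dX ℝ G := by
  simp only [psComp_eq_subst hG, derivative_subst (HasSubst.of_constantCoeff_zero' hG)]

theorem factorial_mul_coeff_mul (f g : ℝ⟦X⟧) (n : ℕ) :
    n ! * coeff n (f * g) = ∑ l ∈ range (n + 1),
      n.choose l * (l ! * coeff l f) * ((n - l)! * coeff (n - l) g) := by
  rw [coeff_mul, Nat.sum_antidiagonal_eq_sum_range_succ_mk, mul_sum]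
  refine sum_congr rfl fun l hl => ?_
  have h := congrArg (Nat.cast (R := ℝ))
    (Nat.choose_mul_factorial_mul_factorial (Nat.lt_succ_iff.mp (mem_range.mp hl)))
  push_cast at h
  rw [← h]
  ring

theorem coeff_rescale_exp (a : ℝ) (n : ℕ) : coeff n (rescale a (exp ℝ)) = a ^ n / n ! := by
  simp [coeff_rescale, coeff_exp, div_eq_mul_inv]

theorem derivative_rescale_exp (a : ℝ) :
    d⁄dX ℝ (rescale a (exp ℝ)) = C a * rescale a (exp ℝ) := by
  ext n
  rw [coeff_derivative, coeff_C_mul, coeff_rescale_exp, coeff_rescale_exp, Nat.factorial_succ]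
  push_cast
  field_simp
  ring

theorem hasDerivAt_coeff_succ_rescale_exp (n : ℕ) (x : ℝ) :
    HasDerivAt (fun y => coeff (n + 1) (rescale y (exp ℝ)))
      (coeff n (rescale x (exp ℝ))) x := by
  simp only [coeff_rescale_exp]
  refine ((hasDerivAt_pow (n + 1) x).div_const _).congr_deriv ?_
  rw [Nat.factorial_succ]
  push_cast
  field_simp

theorem hasDerivAt_coeff_succ_mul_rescale_exp (f : ℝ⟦X⟧) (n : ℕ) (x : ℝ) :
    HasDerivAt (fun y => coeff (n + 1) (f * rescale y (exp ℝ)))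
      (coeff n (f * rescale x (exp ℝ))) x := by
  have hconst : ∀ y, coeff 0 (rescale y (exp ℝ)) = 1 := by simp
  simp only [coeff_mul, Nat.sum_antidiagonal_succ', hconst]
  exact (HasDerivAt.fun_sum fun p _ =>
    (hasDerivAt_coeff_succ_rescale_exp p.2 x).const_mul _).const_add _

theorem constantCoeff_logSeries : constantCoeff logSeries = 0 := by
  simp [logSeries, ← coeff_zero_eq_constantCoeff_apply]

theorem coeff_derivative_logSeries (n : ℕ) : coeff n (d⁄dX ℝ logSeries) = (-1) ^ n := by
  rw [coeff_derivative, logSeries, coeff_mk, if_neg n.succ_ne_zero]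
  push_cast
  field_simp
  ring

theorem one_add_X_mul_derivative_logSeries : (1 + X) * d⁄dX ℝ logSeries = 1 := by
  ext (_ | n)
  · rw [add_mul, one_mul, map_add, coeff_zero_X_mul, coeff_derivative_logSeries]
    simp
  · rw [add_mul, one_mul, map_add, coeff_succ_X_mul, coeff_derivative_logSeries,
      coeff_derivative_logSeries, coeff_one, if_neg n.succ_ne_zero, pow_succ]
    ring

theorem logSeries_eq_X_mul_Dlog : logSeries = X * Dlog := by
  ext (_ | n)
  · simp [logSeries]
  · rw [coeff_succ_X_mul, logSeries, Dlog, coeff_mk, coeff_mk, if_neg n.succ_ne_zero]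
    push_cast
    ring

noncomputable def onePlusXPow (a : ℝ) : ℝ⟦X⟧ :=
  psComp (rescale a (exp ℝ)) logSeries

theorem onePlusXPow_zero : onePlusXPow 0 = 1 := by
  rw [onePlusXPow, rescale_zero, RingHom.comp_apply, constantCoeff_exp, map_one,
    psComp_one constantCoeff_logSeries]

theorem onePlusXPow_add (a b : ℝ) : onePlusXPow (a + b) = onePlusXPow a * onePlusXPow b := by
  rw [onePlusXPow, onePlusXPow, onePlusXPow, ← psComp_mul constantCoeff_logSeries,
    exp_mul_exp_eq_exp_add]

theorem derivative_onePlusXPow (a : ℝ) :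
    d⁄dX ℝ (onePlusXPow a) = C a * onePlusXPow a * d⁄dX ℝ logSeries := by
  rw [onePlusXPow, derivative_psComp constantCoeff_logSeries, derivative_rescale_exp,
    ← smul_eq_C_mul, psComp_smul constantCoeff_logSeries, smul_eq_C_mul]

theorem one_add_X_mul_derivative_onePlusXPow (a : ℝ) :
    (1 + X) * d⁄dX ℝ (onePlusXPow a) = C a * onePlusXPow a := by
  rw [derivative_onePlusXPow]
  linear_combination C a * onePlusXPow a * one_add_X_mul_derivative_logSeries

theorem constantCoeff_onePlusXPow (a : ℝ) : constantCoeff (onePlusXPow a) = 1 := by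
  rw [← coeff_zero_eq_constantCoeff_apply, onePlusXPow, psComp, coeff_mk]
  simp

theorem onePlusXPow_neg_one_mul_one_add_X : onePlusXPow (-1) * (1 + X) = 1 := by
  refine derivative.ext ?_ (by simp [constantCoeff_onePlusXPow])
  rw [Derivation.leibniz, smul_eq_mul, smul_eq_mul, mul_comm, one_add_X_mul_derivative_onePlusXPow]
  simp

theorem onePlusXPow_one : onePlusXPow 1 = 1 + X := by
  calc onePlusXPow 1 = onePlusXPow (1 + -1) * (1 + X) := by
        rw [onePlusXPow_add, mul_assoc, onePlusXPow_neg_one_mul_one_add_X, mul_one]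
    _ = 1 + X := by rw [add_neg_cancel, onePlusXPow_zero, one_mul]

theorem psComp_exp_logSeries : psComp (exp ℝ) logSeries = 1 + X := by
  simpa [onePlusXPow, rescale_one] using onePlusXPow_one

theorem onePlusXPow_neg_one : onePlusXPow (-1) = d⁄dX ℝ logSeries := by
  calc onePlusXPow (-1) = onePlusXPow (-1) * ((1 + X) * d⁄dX ℝ logSeries) := by
        rw [one_add_X_mul_derivative_logSeries, mul_one]
    _ = d⁄dX ℝ logSeries := by rw [← mul_assoc, onePlusXPow_neg_one_mul_one_add_X, one_mul]

theorem coeff_succ_onePlusXPow (a : ℝ) (n : ℕ) :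
    (n + 1) * coeff (n + 1) (onePlusXPow a) = (a - n) * coeff n (onePlusXPow a) := by
  have h := congrArg (coeff n) (one_add_X_mul_derivative_onePlusXPow a)
  rw [add_mul, one_mul, map_add, coeff_derivative, coeff_C_mul] at h
  rcases n with _ | n
  · rw [coeff_zero_X_mul] at h
    simpa using h
  · rw [coeff_succ_X_mul, coeff_derivative] at h
    push_cast at h ⊢
    linarith

theorem constantCoeff_Dlog : constantCoeff Dlog = 1 := by
  simp [Dlog, ← coeff_zero_eq_constantCoeff_apply]

theorem Dlog_inv_mul_logSeries : Dlog⁻¹ * logSeries = X := by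
  rw [logSeries_eq_X_mul_Dlog, mul_left_comm,
    PowerSeries.inv_mul_cancel _ (by simp [constantCoeff_Dlog]), mul_one]

theorem logSeries_ne_zero : logSeries ≠ 0 := fun h => by
  simpa [logSeries] using congrArg (coeff 1) h

noncomputable def expSubOneDivX : ℝ⟦X⟧ :=
  mk fun m => (1 : ℝ) / (m + 1).factorial

theorem constantCoeff_expSubOneDivX : constantCoeff expSubOneDivX = 1 := by
  rw [← coeff_zero_eq_constantCoeff_apply, expSubOneDivX, coeff_mk]
  simp

theorem X_mul_expSubOneDivX : X * expSubOneDivX = exp ℝ - 1 := by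
  ext (_ | n)
  · simp
  · rw [coeff_succ_X_mul, map_sub, coeff_exp, coeff_one, if_neg n.succ_ne_zero, expSubOneDivX,
      coeff_mk]
    simp

theorem psComp_expSubOneDivX_logSeries : psComp expSubOneDivX logSeries = Dlog⁻¹ := by
  refine mul_left_cancel₀ logSeries_ne_zero ?_
  rw [← psComp_X_mul constantCoeff_logSeries, X_mul_expSubOneDivX,
    psComp_sub constantCoeff_logSeries, psComp_one constantCoeff_logSeries, psComp_exp_logSeries,
    mul_comm, Dlog_inv_mul_logSeries]
  ring

theorem X_mul_derivative_Lif (k : ℤ) : X * d⁄dX ℝ (Lif k) = Lif (k - 1) - Lif k := by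
  ext (_ | n)
  · simp [Lif]
  · simp only [coeff_succ_X_mul, coeff_derivative, map_sub, Lif, coeff_mk]
    rw [zpow_sub_one₀ (by positivity), Nat.factorial_succ]
    push_cast
    field_simp
    ring

noncomputable def polyCauchySeries (k : ℤ) (x : ℝ) : ℝ⟦X⟧ :=
  psComp (Lif k) logSeries * onePlusXPow (-x)

theorem polyCauchy_eq (k : ℤ) (n : ℕ) (x : ℝ) :
    polyCauchy k n x = n ! * coeff n (polyCauchySeries k x) :=
  rfl

theorem X_mul_derivative_polyCauchySeries (k : ℤ) (x : ℝ) :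
    X * d⁄dX ℝ (polyCauchySeries k x) =
      Dlog⁻¹ * (polyCauchySeries (k - 1) (x + 1) - polyCauchySeries k (x + 1)) -
        C x * (X * polyCauchySeries k (x + 1)) := by
  have hLif : X * psComp (d⁄dX ℝ (Lif k)) logSeries =
      Dlog⁻¹ * (psComp (Lif (k - 1)) logSeries - psComp (Lif k) logSeries) := by
    rw [← psComp_sub constantCoeff_logSeries, ← X_mul_derivative_Lif,
      psComp_X_mul constantCoeff_logSeries, ← mul_assoc, Dlog_inv_mul_logSeries]
  have hshift : onePlusXPow (-(x + 1)) = onePlusXPow (-x) * d⁄dX ℝ logSeries := by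
    rw [neg_add, onePlusXPow_add, onePlusXPow_neg_one]
  rw [polyCauchySeries, polyCauchySeries, polyCauchySeries, Derivation.leibniz, smul_eq_mul,
    smul_eq_mul, derivative_onePlusXPow, derivative_psComp constantCoeff_logSeries, hshift, map_neg]
  linear_combination onePlusXPow (-x) * d⁄dX ℝ logSeries * hLif

theorem X_mul_derivative_expSubOneDivX :
    X * d⁄dX ℝ expSubOneDivX = exp ℝ - expSubOneDivX := by
  have hexp : d⁄dX ℝ (exp ℝ) = exp ℝ := by
    simpa [rescale_one] using derivative_rescale_exp 1
  have h := congrArg (d⁄dX ℝ) X_mul_expSubOneDivX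
  rw [Derivation.leibniz, map_sub, derivative_one, sub_zero, smul_eq_mul, smul_eq_mul,
    derivative_X, mul_one, hexp] at h
  linear_combination h

theorem expSubOneDivX_mul_inv : expSubOneDivX * expSubOneDivX⁻¹ = 1 :=
  PowerSeries.mul_inv_cancel _ (by simp [constantCoeff_expSubOneDivX])

theorem X_mul_derivative_inv_expSubOneDivX_pow (r : ℕ) :
    X * d⁄dX ℝ (expSubOneDivX⁻¹ ^ r) =
      C (r : ℝ) *
        (expSubOneDivX⁻¹ ^ r - expSubOneDivX⁻¹ ^ (r + 1) - X * expSubOneDivX⁻¹ ^ r) := by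
  induction r with
  | zero => simp
  | succ r ih =>
    have hinv : X * d⁄dX ℝ expSubOneDivX⁻¹ =
        expSubOneDivX⁻¹ - expSubOneDivX⁻¹ ^ 2 - X * expSubOneDivX⁻¹ := by
      rw [derivative_inv']
      linear_combination (-expSubOneDivX⁻¹ ^ 2) * X_mul_derivative_expSubOneDivX -
        expSubOneDivX⁻¹ ^ 2 * X_mul_expSubOneDivX.symm +
        (1 - X) * expSubOneDivX⁻¹ * expSubOneDivX_mul_inv
    rw [pow_succ, Derivation.leibniz, smul_eq_mul, smul_eq_mul]
    push_cast
    rw [map_add, map_one]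
    linear_combination expSubOneDivX⁻¹ * ih + expSubOneDivX⁻¹ ^ r * hinv

noncomputable def bernPolySeries (r : ℕ) (x : ℝ) : ℝ⟦X⟧ :=
  expSubOneDivX⁻¹ ^ r * rescale x (exp ℝ)

theorem bernPoly_eq (r n : ℕ) (x : ℝ) : bernPoly r n x = n ! * coeff n (bernPolySeries r x) :=
  rfl

theorem X_mul_derivative_bernPolySeries (r : ℕ) (x : ℝ) :
    X * d⁄dX ℝ (bernPolySeries r x) = C (r : ℝ) * bernPolySeries r x -
      C (r : ℝ) * bernPolySeries (r + 1) x + C (x - r) * (X * bernPolySeries r x) := by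
  rw [bernPolySeries, bernPolySeries, Derivation.leibniz, smul_eq_mul, smul_eq_mul,
    derivative_rescale_exp, map_sub]
  linear_combination rescale x (exp ℝ) * X_mul_derivative_inv_expSubOneDivX_pow r

theorem bernPolySeries_add_one_sub (r : ℕ) (x : ℝ) :
    bernPolySeries (r + 1) (x + 1) - bernPolySeries (r + 1) x = X * bernPolySeries r x := by
  have hexp : rescale (x + 1) (exp ℝ) = rescale x (exp ℝ) * (1 + X * expSubOneDivX) := by
    rw [← exp_mul_exp_eq_exp_add, rescale_one, X_mul_expSubOneDivX]
    simp
  rw [bernPolySeries, bernPolySeries, bernPolySeries, hexp]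
  linear_combination X * expSubOneDivX⁻¹ ^ r * rescale x (exp ℝ) * expSubOneDivX_mul_inv

theorem bernPoly_succ_order (r m : ℕ) (x : ℝ) :
    r * bernPoly (r + 1) (m + 1) x =
      (r - (m + 1)) * bernPoly r (m + 1) x + (m + 1) * (x - r) * bernPoly r m x := by
  have h := congrArg (coeff (m + 1)) (X_mul_derivative_bernPolySeries r x)
  rw [coeff_succ_X_mul, coeff_derivative, map_add, map_sub, coeff_C_mul, coeff_C_mul, coeff_C_mul,
    coeff_succ_X_mul] at h
  rw [bernPoly_eq, bernPoly_eq, bernPoly_eq, Nat.factorial_succ]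
  push_cast
  linear_combination (m ! : ℝ) * (m + 1) * h

theorem bernPoly_succ_self (n : ℕ) (y : ℝ) :
    bernPoly (n + 1) n y = n ! * coeff n (onePlusXPow (y - 1)) := by
  induction n with
  | zero =>
    have hg : constantCoeff (rescale y (exp ℝ)) = 1 := by
      rw [← coeff_zero_eq_constantCoeff_apply, coeff_rescale_exp]
      simp
    simp [bernPoly_eq, bernPolySeries, constantCoeff_expSubOneDivX, constantCoeff_onePlusXPow, hg]
  | succ n ih =>
    have h := bernPoly_succ_order (n + 1) n y
    have he := coeff_succ_onePlusXPow (y - 1) n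
    rw [Nat.factorial_succ]
    push_cast at h ⊢
    refine mul_left_cancel₀ (n.cast_add_one_ne_zero (R := ℝ)) ?_
    -- for `r = m + 1` the term with `bernPoly (n + 1) (n + 1) y` drops out of `h`
    linear_combination h + (n + 1) * (y - n - 1) * ih - (n + 1) * (n ! : ℝ) * he

theorem bernPoly_succ_add_one_sub (r n : ℕ) (x : ℝ) :
    bernPoly (r + 1) (n + 1) (x + 1) - bernPoly (r + 1) (n + 1) x =
      (n + 1) * bernPoly r n x := by
  rw [bernPoly_eq, bernPoly_eq, bernPoly_eq, ← mul_sub, ← map_sub, bernPolySeries_add_one_sub,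
    coeff_succ_X_mul, Nat.factorial_succ]
  push_cast
  ring

theorem hasDerivAt_bernPoly (r n : ℕ) (x : ℝ) :
    HasDerivAt (bernPoly r (n + 1)) ((n + 1) * bernPoly r n x) x := by
  refine ((hasDerivAt_coeff_succ_mul_rescale_exp (expSubOneDivX⁻¹ ^ r) n x).const_mul
    ((n + 1)! : ℝ)).congr_deriv ?_
  rw [bernPoly_eq, Nat.factorial_succ, bernPolySeries]
  push_cast
  ring

theorem continuous_bernPoly (r n : ℕ) : Continuous (bernPoly r n) := by
  show Continuous fun x => (n ! : ℝ) * coeff n (bernPolySeries r x)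
  simp only [bernPolySeries, coeff_mul, coeff_rescale_exp]
  fun_prop

theorem integral_coeff_psComp_rescale_exp (G : ℝ⟦X⟧) (n : ℕ) :
    ∫ y in (0 : ℝ)..1, coeff n (psComp (rescale y (exp ℝ)) G) =
      coeff n (psComp expSubOneDivX G) := by
  simp only [psComp, coeff_mk, coeff_rescale_exp]
  rw [intervalIntegral.integral_finsetSum fun m _ =>
    Continuous.intervalIntegrable (by fun_prop) _ _]
  refine sum_congr rfl fun m _ => ?_
  rw [intervalIntegral.integral_mul_const, intervalIntegral.integral_div, integral_pow,
    expSubOneDivX, coeff_mk, Nat.factorial_succ]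
  push_cast
  field_simp
  ring

theorem cauchyNum_eq_integral (n : ℕ) :
    cauchyNum n = ∫ y in (0 : ℝ)..1, n ! * coeff n (onePlusXPow y) := by
  simp only [onePlusXPow]
  rw [intervalIntegral.integral_const_mul, integral_coeff_psComp_rescale_exp,
    psComp_expSubOneDivX_logSeries, cauchyNum]

theorem bernPoly_self_one (n : ℕ) : bernPoly n n 1 = cauchyNum n := by
  refine mul_left_cancel₀ (n.cast_add_one_ne_zero (R := ℝ)) ?_
  calc (n + 1) * bernPoly n n 1 = bernPoly (n + 1) (n + 1) 2 - bernPoly (n + 1) (n + 1) 1 := by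
        rw [← bernPoly_succ_add_one_sub, one_add_one_eq_two]
    _ = ∫ y in (1 : ℝ)..2, (n + 1) * bernPoly (n + 1) n y :=
        (intervalIntegral.integral_eq_sub_of_hasDerivAt (fun y _ => hasDerivAt_bernPoly (n + 1) n y)
          (((continuous_bernPoly _ _).const_mul _).intervalIntegrable _ _)).symm
    _ = (n + 1) * ∫ y in (0 : ℝ)..1, n ! * coeff n (onePlusXPow y) := by
        simp only [bernPoly_succ_self, intervalIntegral.integral_const_mul,
          intervalIntegral.integral_comp_sub_right fun y => n ! * coeff n (onePlusXPow y)]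
        norm_num
    _ = (n + 1) * cauchyNum n := by rw [cauchyNum_eq_integral]

end

/-- Theorem 4 of the paper. -/
theorem polyCauchy_recurrence_bernoulli (k : ℤ) (n : ℕ) (hn : 1 ≤ n) (x : ℝ) :
    polyCauchy k n x =
      -x * polyCauchy k (n - 1) (x + 1) +
      (1 / (n : ℝ)) * ∑ l ∈ Finset.range (n + 1),
        (n.choose l : ℝ) * bernPoly l l 1 *
          (polyCauchy (k - 1) (n - l) (x + 1) - polyCauchy k (n - l) (x + 1)) := by
  obtain ⟨m, rfl⟩ : ∃ m, n = m + 1 := ⟨n - 1, by omega⟩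
  have hsum : ∑ l ∈ Finset.range (m + 2), ((m + 1).choose l : ℝ) * bernPoly l l 1 *
      (polyCauchy (k - 1) (m + 1 - l) (x + 1) - polyCauchy k (m + 1 - l) (x + 1)) =
      (m + 1).factorial * coeff (m + 1)
        (Dlog⁻¹ * (polyCauchySeries (k - 1) (x + 1) - polyCauchySeries k (x + 1))) := by
    rw [factorial_mul_coeff_mul]
    refine sum_congr rfl fun l _ => ?_
    rw [bernPoly_self_one, cauchyNum, polyCauchy_eq, polyCauchy_eq, map_sub]
    ring
  have hcoeff := congrArg (coeff (m + 1)) (X_mul_derivative_polyCauchySeries k x)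
  rw [coeff_succ_X_mul, coeff_derivative, map_sub, coeff_C_mul, coeff_succ_X_mul] at hcoeff
  rw [hsum, Nat.add_sub_cancel, polyCauchy_eq, polyCauchy_eq, Nat.factorial_succ]
  push_cast at hcoeff ⊢
  field_simp
  linear_combination hcoeff
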